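/- arXiv:1508.00242 — 2 statements merged into one kernel-verified Lean document; each statement's English description precedes it below -/
import Mathlib

section
/- Let a, b : ℝ → ℝ be C² with b > a on (0,1) and suppose D = {(t,x) : 0 < t < 1, a(t) < x < b(t)} is convex. Then Φ(t) = -log(b(t)-a(t)) is affine on (0,1) if and only if there exists a constant c ∈ ℝ with a(t) = a(0) + ct and b(t) = b(0) + ct for all t ∈ (0,1) (triviality of the family of intervals). -/
/-!
Convexity of `D` makes the lower boundary `a` convex and the upper boundary `b` concave, so the
width `b - a` is concave. If `Φ` is affine, the width is `exp` of an affine function, which is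
strictly convex unless its slope vanishes; hence the width is a constant `K`. Then `a = b - K` is
both convex and concave, i.e. affine, and continuity carries the formulas to `t = 0`.
-/

open Set Real Filter Topology

theorem convex_of_convex_regionBetween {s : Set ℝ} {f g : ℝ → ℝ} (hfg : ∀ x ∈ s, f x < g x)
    (hD : Convex ℝ (regionBetween f g s)) : Convex ℝ s := by
  have hmid : ∀ x ∈ s, (x, (f x + g x) / 2) ∈ regionBetween f g s := fun x hx ↦
    ⟨hx, by linarith [hfg x hx], by linarith [hfg x hx]⟩
  intro x hx y hy l m hl hm hlm
  exact (hD (hmid x hx) (hmid y hy) hl hm hlm).1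

/-- The lower boundary of a convex region is approached from inside along the segments
`x ↦ f x + δ (g x - f x)`, `δ ↓ 0`. -/
theorem convexOn_of_convex_regionBetween {s : Set ℝ} {f g : ℝ → ℝ} (hfg : ∀ x ∈ s, f x < g x)
    (hD : Convex ℝ (regionBetween f g s)) : ConvexOn ℝ s f := by
  refine ⟨convex_of_convex_regionBetween hfg hD, fun x hx y hy l m hl hm hlm ↦ ?_⟩
  let lift : ℝ → ℝ → ℝ := fun δ z ↦ f z + δ * (g z - f z)
  have hlift : ∀ z ∈ s, ∀ δ ∈ Ioo (0 : ℝ) 1, (z, lift δ z) ∈ regionBetween f g s :=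
    fun z hz δ hδ ↦ ⟨hz, by nlinarith [hfg z hz, hδ.1], by nlinarith [hfg z hz, hδ.2]⟩
  have hcomb : Tendsto (fun δ ↦ l * lift δ x + m * lift δ y) (𝓝[>] 0)
      (𝓝 (l * f x + m * f y)) := by
    have : Continuous fun δ ↦ l * lift δ x + m * lift δ y := by fun_prop
    simpa [lift] using this.continuousWithinAt.tendsto (x := 0) (s := Ioi 0)
  refine ge_of_tendsto hcomb ?_
  filter_upwards [Ioo_mem_nhdsGT one_pos] with δ hδ
  exact (hD (hlift x hx δ hδ) (hlift y hy δ hδ) hl hm hlm).2.1.le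

theorem concaveOn_of_convex_regionBetween {s : Set ℝ} {f g : ℝ → ℝ} (hfg : ∀ x ∈ s, f x < g x)
    (hD : Convex ℝ (regionBetween f g s)) : ConcaveOn ℝ s g := by
  have hreflect : regionBetween (-g) (-f) s =
      (LinearMap.id.prodMap (-LinearMap.id) : ℝ × ℝ →ₗ[ℝ] ℝ × ℝ) ⁻¹' regionBetween f g s := by
    ext p
    simp only [regionBetween, mem_ofPred_eq, mem_preimage, mem_Ioo, Pi.neg_apply,
      LinearMap.prodMap_apply, LinearMap.id_apply, LinearMap.neg_apply]
    constructor <;> rintro ⟨h, h1, h2⟩ <;> exact ⟨h, by linarith, by linarith⟩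
  refine neg_convexOn_iff.1 (convexOn_of_convex_regionBetween (g := -f) (fun x hx ↦ ?_) ?_)
  · simpa using hfg x hx
  · exact hreflect ▸ hD.linear_preimage _

theorem ConvexOn.secant_eq_of_concaveOn {s : Set ℝ} {f : ℝ → ℝ} (hcv : ConvexOn ℝ s f)
    (hcc : ConcaveOn ℝ s f) {p x y : ℝ} (hp : p ∈ s) (hx : x ∈ s) (hy : y ∈ s)
    (hxp : x ≠ p) (hyp : y ≠ p) : (f x - f p) / (x - p) = (f y - f p) / (y - p) := by
  wlog hxy : x ≤ y generalizing x y
  · exact (this hy hx hyp hxp (le_of_not_ge hxy)).symm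
  refine le_antisymm (hcv.secant_mono hp hx hy hxp hyp hxy) ?_
  have := (neg_convexOn_iff.2 hcc).secant_mono hp hx hy hxp hyp hxy
  simpa only [Pi.neg_apply, neg_sub_neg, ← neg_sub (f p), neg_div, neg_le_neg_iff] using this

theorem ConvexOn.exists_eq_affine_of_concaveOn {s : Set ℝ} {f : ℝ → ℝ} (hcv : ConvexOn ℝ s f)
    (hcc : ConcaveOn ℝ s f) (hs : s.Nontrivial) : ∃ c d : ℝ, ∀ t ∈ s, f t = c * t + d := by
  obtain ⟨p, hp, r, hr, hrp⟩ := hs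
  refine ⟨(f r - f p) / (r - p), f p - (f r - f p) / (r - p) * p, fun t ht ↦ ?_⟩
  rcases eq_or_ne t p with rfl | htp
  · ring
  have := hcv.secant_eq_of_concaveOn hcc hp ht hr htp hrp.symm
  rw [← this]
  field_simp [sub_ne_zero.2 htp]
  ring

theorem eq_zero_of_concaveOn_exp_affine {s : Set ℝ} {c d : ℝ} (hs : s.Nontrivial)
    (h : ConcaveOn ℝ s fun t ↦ exp (c * t + d)) : c = 0 := by
  by_contra hc
  obtain ⟨x, hx, y, hy, hxy⟩ := hs
  have hne : c * x + d ≠ c * y + d := by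
    intro h; exact hxy (mul_left_cancel₀ hc (add_right_cancel h))
  have hstrict := strictConvexOn_exp.2 (mem_univ _) (mem_univ _) hne
    (by norm_num : (0 : ℝ) < 1 / 2) (by norm_num : (0 : ℝ) < 1 / 2) (by norm_num)
  have hconc := h.2 hx hy (by norm_num : (0 : ℝ) ≤ 1 / 2) (by norm_num : (0 : ℝ) ≤ 1 / 2)
    (by norm_num)
  simp only [smul_eq_mul] at hstrict hconc
  have hmid : 1 / 2 * (c * x + d) + 1 / 2 * (c * y + d) = c * (1 / 2 * x + 1 / 2 * y) + d := by
    ring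
  rw [hmid] at hstrict
  linarith

theorem eq_of_continuous_of_eqOn_Ioo {f : ℝ → ℝ} {x y c d : ℝ} (hf : Continuous f)
    (h : ∀ t ∈ Ioo x y, f t = c * t + d) (hxy : x < y) : f x = c * x + d := by
  have hcl : EqOn f (fun t ↦ c * t + d) (closure (Ioo x y)) :=
    EqOn.closure h hf (by fun_prop)
  rw [closure_Ioo hxy.ne] at hcl
  exact hcl (left_mem_Icc.2 hxy.le)

/-- With D convex, Φ(t) = -log(b(t)-a(t)) is affine on (0,1) iff
    there is c with a(t) = a(0)+ct and b(t) = b(0)+ct on (0,1) (triviality). -/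
theorem affine_iff_trivial (a b : ℝ → ℝ)
    (ha : ContDiff ℝ 2 a) (hb : ContDiff ℝ 2 b)
    (hab : ∀ t, a t < b t)
    (hD : Convex ℝ {p : ℝ × ℝ | 0 < p.1 ∧ p.1 < 1 ∧ a p.1 < p.2 ∧ p.2 < b p.1}) :
    (∃ c d : ℝ, ∀ t ∈ Set.Ioo (0 : ℝ) 1, -Real.log (b t - a t) = c * t + d) ↔
      (∃ c : ℝ, ∀ t ∈ Set.Ioo (0 : ℝ) 1, a t = a 0 + c * t ∧ b t = b 0 + c * t) := by
  have hregion : Convex ℝ (regionBetween a b (Ioo 0 1)) := by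
    convert hD using 1
    ext p
    simp only [regionBetween, mem_Ioo, mem_ofPred_eq, and_assoc]
  have hI : (Ioo (0 : ℝ) 1).Nontrivial := (Ioo_infinite zero_lt_one).nontrivial
  have ha_cvx := convexOn_of_convex_regionBetween (fun t _ ↦ hab t) hregion
  have hb_ccv := concaveOn_of_convex_regionBetween (fun t _ ↦ hab t) hregion
  constructor
  · rintro ⟨c, d, hΦ⟩
    have hgap : EqOn (b - a) (fun t ↦ exp (-c * t + -d)) (Ioo 0 1) := fun t ht ↦ by
      rw [Pi.sub_apply, ← exp_log (sub_pos.2 (hab t)), ← neg_neg (log _), hΦ t ht]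
      ring_nf
    have hc : -c = 0 := eq_zero_of_concaveOn_exp_affine hI ((hb_ccv.sub ha_cvx).congr hgap)
    have hgap' : ∀ t ∈ Ioo (0 : ℝ) 1, b t = a t + exp (-d) := fun t ht ↦ by
      have := hgap ht
      simp only [hc, zero_mul, zero_add, Pi.sub_apply] at this
      linarith
    have ha_ccv : ConcaveOn ℝ (Ioo 0 1) a :=
      (hb_ccv.add_const (-exp (-d))).congr fun t ht ↦ by simp [hgap' t ht]
    obtain ⟨c', d', haff⟩ := ha_cvx.exists_eq_affine_of_concaveOn ha_ccv hI
    have ha0 := eq_of_continuous_of_eqOn_Ioo ha.continuous haff zero_lt_one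
    have hb0 := eq_of_continuous_of_eqOn_Ioo (c := c') (d := d' + exp (-d)) hb.continuous
      (fun t ht ↦ by rw [hgap' t ht, haff t ht]; ring) zero_lt_one
    refine ⟨c', fun t ht ↦ ⟨?_, ?_⟩⟩
    · rw [ha0, haff t ht]; ring
    · rw [hb0, hgap' t ht, haff t ht]; ring
  · rintro ⟨c, h⟩
    refine ⟨0, -log (b 0 - a 0), fun t ht ↦ ?_⟩
    rw [(h t ht).1, (h t ht).2]
    ring_nf
end

section
/- With ψ = −log(−ρ) and notation as above, the coefficients of the horizontal lift satisfy Σ_α ψ_{j\bar α} ψ^{\bar α β} = −ρ^β ρ_j/(ρ − |∂ρ|²) + Σ_α (ρ^{\bar α β} ρ_{j\bar α} + ρ^{\bar α} ρ^β ρ_{j\bar α}/(ρ − |∂ρ|²)), where ρ_j = ∂ρ/∂t^j and ρ_{j\bar α} = ∂²ρ/∂t^j∂μ̄^α. In particular this expression extends smoothly to the boundary {ρ = 0} (the denominator ρ − |∂ρ|² being nonzero there when ∂ρ ≠ 0 on {ρ=0}). -/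
open scoped ComplexOrder

namespace Stmt9

/-- Wirtinger derivative ∂f in complex direction `v` at `p`. -/
noncomputable def wirt {E : Type*} [NormedAddCommGroup E] [NormedSpace ℂ E]
    (f : E → ℂ) (v : E) (p : E) : ℂ :=
  (fderiv ℝ f p v - Complex.I * fderiv ℝ f p (Complex.I • v)) / 2

/-- Conjugate Wirtinger derivative ∂̄f in direction `v` at `p`. -/
noncomputable def wirtBar {E : Type*} [NormedAddCommGroup E] [NormedSpace ℂ E]
    (f : E → ℂ) (v : E) (p : E) : ℂ :=
  (fderiv ℝ f p v + Complex.I * fderiv ℝ f p (Complex.I • v)) / 2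

variable {m n : ℕ}

/-- direction ∂/∂t^j in the base -/
def et (j : Fin m) : (Fin m → ℂ) × (Fin n → ℂ) := (Pi.single j 1, 0)

/-- direction ∂/∂μ^α in the fibre -/
def ez (α : Fin n) : (Fin m → ℂ) × (Fin n → ℂ) := (0, Pi.single α 1)

/-- ρ_j = ∂ρ/∂t^j -/
noncomputable def dj (ρ : (Fin m → ℂ) × (Fin n → ℂ) → ℝ) (j : Fin m) :
    (Fin m → ℂ) × (Fin n → ℂ) → ℂ :=
  wirt (fun q => (ρ q : ℂ)) (et j)

/-- ρ_α = ∂ρ/∂μ^α -/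
noncomputable def dza (ρ : (Fin m → ℂ) × (Fin n → ℂ) → ℝ) (α : Fin n) :
    (Fin m → ℂ) × (Fin n → ℂ) → ℂ :=
  wirt (fun q => (ρ q : ℂ)) (ez α)

/-- ρ_{ᾱ} = ∂ρ/∂μ̄^α -/
noncomputable def dzbar (ρ : (Fin m → ℂ) × (Fin n → ℂ) → ℝ) (α : Fin n) :
    (Fin m → ℂ) × (Fin n → ℂ) → ℂ :=
  wirtBar (fun q => (ρ q : ℂ)) (ez α)

/-- fibre complex Hessian ρ_{λν̄} -/
noncomputable def hessF (ρ : (Fin m → ℂ) × (Fin n → ℂ) → ℝ) (lam ν : Fin n) :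
    (Fin m → ℂ) × (Fin n → ℂ) → ℂ :=
  wirt (dzbar ρ ν) (ez lam)

/-- mixed Hessian ρ_{jᾱ} = ∂²ρ/∂t^j∂μ̄^α -/
noncomputable def hessTbar (ρ : (Fin m → ℂ) × (Fin n → ℂ) → ℝ) (j : Fin m) (α : Fin n) :
    (Fin m → ℂ) × (Fin n → ℂ) → ℂ :=
  wirt (dzbar ρ α) (et j)

/-- ρ^β = Σ_γ ρ^{γ̄β} ρ_{γ̄}, `R γ β` standing for ρ^{γ̄β}. -/
noncomputable def rup (ρ : (Fin m → ℂ) × (Fin n → ℂ) → ℝ) (R : Matrix (Fin n) (Fin n) ℂ)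
    (β : Fin n) (p : (Fin m → ℂ) × (Fin n → ℂ)) : ℂ :=
  ∑ γ, R γ β * dzbar ρ γ p

/-- ρ^{ᾱ} = Σ_γ ρ^{ᾱγ} ρ_γ. -/
noncomputable def rbarup (ρ : (Fin m → ℂ) × (Fin n → ℂ) → ℝ) (R : Matrix (Fin n) (Fin n) ℂ)
    (α : Fin n) (p : (Fin m → ℂ) × (Fin n → ℂ)) : ℂ :=
  ∑ γ, R α γ * dza ρ γ p

/-- |∂ρ|² = Σ_α ρ_α ρ^α. -/
noncomputable def normdsq (ρ : (Fin m → ℂ) × (Fin n → ℂ) → ℝ)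
    (R : Matrix (Fin n) (Fin n) ℂ) (p : (Fin m → ℂ) × (Fin n → ℂ)) : ℂ :=
  ∑ α, dza ρ α p * rup ρ R α p

lemma hasDerivAt_neglogneg {x : ℝ} (hx : x ≠ 0) :
    HasDerivAt (fun t : ℝ => -Real.log (-t)) (-x⁻¹) x := by
  have h1 : HasDerivAt (fun t : ℝ => -t) (-1) x := (hasDerivAt_id x).neg
  have h2 : HasDerivAt Real.log (-x)⁻¹ (-x) := Real.hasDerivAt_log (neg_ne_zero.2 hx)
  have h3 := (h2.comp x h1).neg
  exact h3.congr_deriv (by simp)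

lemma hasFDerivAt_psi (ρ : (Fin m → ℂ) × (Fin n → ℂ) → ℝ) (hρ : ContDiff ℝ (⊤ : ℕ∞) ρ)
    (q : (Fin m → ℂ) × (Fin n → ℂ)) (hq : ρ q ≠ 0) :
    HasFDerivAt (fun x => -Real.log (-(ρ x))) ((-(ρ q)⁻¹) • fderiv ℝ ρ q) q :=
  (hasDerivAt_neglogneg hq).comp_hasFDerivAt q (hρ.differentiable (by simp) q).hasFDerivAt

lemma wirtBar_psi (ρ : (Fin m → ℂ) × (Fin n → ℂ) → ℝ) (hρ : ContDiff ℝ (⊤ : ℕ∞) ρ)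
    (v q : (Fin m → ℂ) × (Fin n → ℂ)) (hq : ρ q ≠ 0) :
    wirtBar (fun x => ((-Real.log (-(ρ x)) : ℝ) : ℂ)) v q
      = -((ρ q : ℂ))⁻¹ * wirtBar (fun x => (ρ x : ℂ)) v q := by
  have hρ' : HasFDerivAt ρ (fderiv ℝ ρ q) q := (hρ.differentiable (by simp) q).hasFDerivAt
  have hC : HasFDerivAt (fun x => (ρ x : ℂ)) (Complex.ofRealCLM.comp (fderiv ℝ ρ q)) q :=
    Complex.ofRealCLM.hasFDerivAt.comp q hρ'
  have hψ := hasFDerivAt_psi ρ hρ q hq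
  have hψC : HasFDerivAt (fun x => ((-Real.log (-(ρ x)) : ℝ) : ℂ))
      (Complex.ofRealCLM.comp ((-(ρ q)⁻¹) • fderiv ℝ ρ q)) q :=
    Complex.ofRealCLM.hasFDerivAt.comp q hψ
  unfold wirtBar
  rw [hψC.fderiv, hC.fderiv]
  simp only [ContinuousLinearMap.coe_comp', Function.comp_apply,
    ContinuousLinearMap.coe_smul', Pi.smul_apply, smul_eq_mul, Complex.ofRealCLM_apply]
  push_cast
  ring

lemma diff_wirtBar (ρ : (Fin m → ℂ) × (Fin n → ℂ) → ℝ) (hρ : ContDiff ℝ (⊤ : ℕ∞) ρ)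
    (w : (Fin m → ℂ) × (Fin n → ℂ)) :
    Differentiable ℝ (wirtBar (fun x => (ρ x : ℂ)) w) := by
  have h1 : ContDiff ℝ (⊤ : ℕ∞) (fun x => (ρ x : ℂ)) := Complex.ofRealCLM.contDiff.comp hρ
  have h2 : ContDiff ℝ (⊤ : ℕ∞) (fderiv ℝ (fun x => (ρ x : ℂ))) := h1.fderiv_right (by simp)
  have h3 : ∀ u, Differentiable ℝ (fun q => fderiv ℝ (fun x => (ρ x : ℂ)) q u) := fun u =>
    fun q => ((ContinuousLinearMap.apply ℝ ℂ u).differentiable.comp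
      (h2.differentiable (by simp))) q
  unfold wirtBar
  simp only [div_eq_mul_inv]
  exact ((h3 w).add ((h3 (Complex.I • w)).const_mul Complex.I)).mul_const _

/-- MAIN derivative lemma -/
lemma wirt_wirtBar_psi (ρ : (Fin m → ℂ) × (Fin n → ℂ) → ℝ) (hρ : ContDiff ℝ (⊤ : ℕ∞) ρ)
    (p : (Fin m → ℂ) × (Fin n → ℂ)) (hneg : ρ p < 0)
    (v w : (Fin m → ℂ) × (Fin n → ℂ)) :
    wirt (wirtBar (fun x => ((-Real.log (-(ρ x)) : ℝ) : ℂ)) w) v p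
      = ((ρ p : ℂ))⁻¹ ^ 2 * wirt (fun x => (ρ x : ℂ)) v p
          * wirtBar (fun x => (ρ x : ℂ)) w p
        - ((ρ p : ℂ))⁻¹ * wirt (wirtBar (fun x => (ρ x : ℂ)) w) v p := by
  set g := wirtBar (fun x => (ρ x : ℂ)) w with hg
  have hz : (ρ p : ℂ) ≠ 0 := by
    simp only [ne_eq, Complex.ofReal_eq_zero]; linarith
  -- eventual equality
  have hopen : IsOpen {q : (Fin m → ℂ) × (Fin n → ℂ) | ρ q < 0} :=
    isOpen_Iio.preimage hρ.continuous
  have hev : wirtBar (fun x => ((-Real.log (-(ρ x)) : ℝ) : ℂ)) w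
      =ᶠ[nhds p] fun q => -((ρ q : ℂ))⁻¹ * g q := by
    filter_upwards [hopen.mem_nhds hneg] with q hq
    exact wirtBar_psi ρ hρ w q (ne_of_lt hq)
  -- fderiv of RHS function
  have hρ' : HasFDerivAt ρ (fderiv ℝ ρ p) p := (hρ.differentiable (by simp) p).hasFDerivAt
  have hC : HasFDerivAt (fun x => (ρ x : ℂ)) (Complex.ofRealCLM.comp (fderiv ℝ ρ p)) p :=
    Complex.ofRealCLM.hasFDerivAt.comp p hρ'
  have hinv : HasFDerivAt (fun q => ((ρ q : ℂ))⁻¹)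
      ((-((ρ p : ℂ) ^ 2)⁻¹) • (Complex.ofRealCLM.comp (fderiv ℝ ρ p))) p :=
    (hasDerivAt_inv hz).comp_hasFDerivAt p hC
  have hgd : HasFDerivAt g (fderiv ℝ g p) p := ((diff_wirtBar ρ hρ w) p).hasFDerivAt
  have hF : HasFDerivAt (fun q => -((ρ q : ℂ))⁻¹ * g q) _ p := (hinv.neg).mul hgd
  unfold wirt
  rw [hev.fderiv_eq, hF.fderiv, hC.fderiv]
  simp only [ContinuousLinearMap.add_apply, ContinuousLinearMap.coe_smul',
    Pi.smul_apply, ContinuousLinearMap.neg_apply, ContinuousLinearMap.coe_comp',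
    Function.comp_apply, smul_eq_mul, Complex.ofRealCLM_apply, Pi.neg_apply]
  field_simp
  ring


lemma wirtBar_eq_conj (ρ : (Fin m → ℂ) × (Fin n → ℂ) → ℝ) (hρ : ContDiff ℝ (⊤ : ℕ∞) ρ)
    (w p : (Fin m → ℂ) × (Fin n → ℂ)) :
    wirtBar (fun x => (ρ x : ℂ)) w p
      = starRingEnd ℂ (wirt (fun x => (ρ x : ℂ)) w p) := by
  have hρ' : HasFDerivAt ρ (fderiv ℝ ρ p) p := (hρ.differentiable (by simp) p).hasFDerivAt
  have hC : HasFDerivAt (fun x => (ρ x : ℂ)) (Complex.ofRealCLM.comp (fderiv ℝ ρ p)) p :=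
    Complex.ofRealCLM.hasFDerivAt.comp p hρ'
  unfold wirt wirtBar
  rw [hC.fderiv]
  simp only [ContinuousLinearMap.coe_comp', Function.comp_apply, Complex.ofRealCLM_apply,
    map_div₀, map_sub, map_mul, Complex.conj_I, Complex.conj_ofReal, map_ofNat]
  ring

/-- with ψ = −log(−ρ), the coefficients of the horizontal lift satisfy
    Σ_α ψ_{jᾱ} ψ^{ᾱβ} = −ρ^β ρ_j/(ρ−|∂ρ|²) + Σ_α (ρ^{ᾱβ} ρ_{jᾱ} + ρ^{ᾱ}ρ^β ρ_{jᾱ}/(ρ−|∂ρ|²)),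
    an expression smooth up to {ρ = 0}. -/
theorem horizontal_lift_coefficients (ρ : (Fin m → ℂ) × (Fin n → ℂ) → ℝ)
    (hρ : ContDiff ℝ (⊤ : ℕ∞) ρ)
    (p : (Fin m → ℂ) × (Fin n → ℂ)) (hneg : ρ p < 0)
    (hpd : Matrix.PosDef (Matrix.of fun lam ν => hessF ρ lam ν p))
    (R : Matrix (Fin n) (Fin n) ℂ)
    (hR1 : (Matrix.of fun lam ν => hessF ρ lam ν p) * R = 1)
    (hR2 : R * (Matrix.of fun lam ν => hessF ρ lam ν p) = 1)
    (Ψ : Matrix (Fin n) (Fin n) ℂ)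
    (hΨ1 : (Matrix.of fun lam ν => hessF (fun q => -Real.log (-(ρ q))) lam ν p) * Ψ = 1)
    (hΨ2 : Ψ * (Matrix.of fun lam ν => hessF (fun q => -Real.log (-(ρ q))) lam ν p) = 1) :
    ∀ (j : Fin m) (β : Fin n),
      (∑ α, hessTbar (fun q => -Real.log (-(ρ q))) j α p * Ψ α β) =
        -(rup ρ R β p * dj ρ j p / ((ρ p : ℂ) - normdsq ρ R p)) +
          ∑ α, (R α β * hessTbar ρ j α p +
            rbarup ρ R α p * rup ρ R β p * hessTbar ρ j α p /
              ((ρ p : ℂ) - normdsq ρ R p)) := by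
  intro j β
  set ψ : (Fin m → ℂ) × (Fin n → ℂ) → ℝ := fun q => -Real.log (-(ρ q)) with hψdef
  set z : ℂ := (ρ p : ℂ) with hzdef
  set s : ℂ := normdsq ρ R p with hsdef
  have hz : z ≠ 0 := by
    simp only [hzdef, ne_eq, Complex.ofReal_eq_zero]; linarith
  -- derivative formulas
  have hT : ∀ α, hessTbar ψ j α p
      = z⁻¹ ^ 2 * dj ρ j p * dzbar ρ α p - z⁻¹ * hessTbar ρ j α p := fun α =>
    wirt_wirtBar_psi ρ hρ p hneg (et j) (ez α)
  have hM : ∀ ν α, hessF ψ ν α p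
      = z⁻¹ ^ 2 * dza ρ ν p * dzbar ρ α p - z⁻¹ * hessF ρ ν α p := fun ν α =>
    wirt_wirtBar_psi ρ hρ p hneg (ez ν) (ez α)
  -- nonvanishing of z - s
  have hconj : ∀ γ, dzbar ρ γ p = starRingEnd ℂ (dza ρ γ p) := fun γ =>
    wirtBar_eq_conj ρ hρ (ez γ) p
  have hDne : z - s ≠ 0 := by
    set v : Fin n → ℂ := fun α => dza ρ α p with hvdef
    have hRinv : (Matrix.of fun lam ν => hessF ρ lam ν p)⁻¹ = R :=
      Matrix.inv_eq_right_inv hR1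
    have hRpd : R.PosDef := hRinv ▸ hpd.inv
    have h0 : 0 ≤ dotProduct (star v) (R.mulVec v) := hRpd.posSemidef.dotProduct_mulVec_nonneg v
    have hs_eq : s = dotProduct (star v) (R.mulVec v) := by
      simp only [hsdef, normdsq, rup, dotProduct, Matrix.mulVec, 
        Pi.star_apply, Finset.mul_sum, Finset.sum_mul]
      rw [Finset.sum_comm]
      refine Finset.sum_congr rfl fun γ _ => Finset.sum_congr rfl fun α _ => ?_
      rw [hconj γ]
      simp only [hvdef, RCLike.star_def]
      ring
    rw [hs_eq] at *
    rw [Complex.le_def] at h0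
    intro h
    have hre := congrArg Complex.re h
    simp only [Complex.sub_re, hzdef, Complex.ofReal_re, Complex.zero_re] at hre
    have : (0:ℝ) ≤ (dotProduct (star v) (R.mulVec v)).re := by simpa using h0.1
    linarith
  -- notation
  set H : Fin n → ℂ := fun lam => hessTbar ρ j lam p with hHdef
  set A : Fin n → ℂ := fun ν => rup ρ R ν p with hAdef
  set B : Fin n → ℂ := fun ν => ∑ lam, R lam ν * H lam with hBdef
  set T : ℂ := ∑ lam, rbarup ρ R lam p * H lam with hTdef
  set k : ℂ := (T - dj ρ j p) / (z - s) with hkdef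
  set c : Fin n → ℂ := fun ν => A ν * k + B ν with hcdef
  -- the RHS of the goal equals c β
  have hRHS : -(rup ρ R β p * dj ρ j p / (z - s)) +
      ∑ α, (R α β * hessTbar ρ j α p +
        rbarup ρ R α p * rup ρ R β p * hessTbar ρ j α p / (z - s)) = c β := by
    have hsplit : ∑ α, (R α β * hessTbar ρ j α p +
        rbarup ρ R α p * rup ρ R β p * hessTbar ρ j α p / (z - s))
        = B β + (A β / (z - s)) * T := by
      rw [Finset.sum_add_distrib]
      congr 1
      rw [hTdef, Finset.mul_sum]
      refine Finset.sum_congr rfl fun lam _ => ?_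
      simp only [hAdef, hHdef]
      ring
    rw [hsplit, hcdef, hkdef]
    simp only [hAdef]
    field_simp
    ring
  -- sum identities
  have hS1 : ∑ ν, A ν * dza ρ ν p = s := by
    simp only [hsdef, normdsq, hAdef]
    exact Finset.sum_congr rfl fun ν _ => mul_comm _ _
  have hS2 : ∑ ν, B ν * dza ρ ν p = T := by
    simp only [hBdef, hTdef, rbarup, Finset.sum_mul, Finset.mul_sum]
    rw [Finset.sum_comm]
    exact Finset.sum_congr rfl fun lam _ => Finset.sum_congr rfl fun ν _ => by ring
  have hR2' : ∀ γ α, (∑ ν, R γ ν * hessF ρ ν α p) = if γ = α then 1 else 0 := by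
    intro γ α
    have := congrFun (congrFun hR2 γ) α
    simpa [Matrix.mul_apply, Matrix.one_apply] using this
  have hS3 : ∀ α, ∑ ν, A ν * hessF ρ ν α p = dzbar ρ α p := by
    intro α
    simp only [hAdef, rup, Finset.sum_mul]
    rw [Finset.sum_comm]
    have : ∀ γ, ∑ ν, R γ ν * dzbar ρ γ p * hessF ρ ν α p
        = dzbar ρ γ p * ∑ ν, R γ ν * hessF ρ ν α p := by
      intro γ; rw [Finset.mul_sum]; exact Finset.sum_congr rfl fun ν _ => by ring
    rw [Finset.sum_congr rfl fun γ _ => this γ]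
    simp only [hR2']
    simp [Finset.sum_ite_eq]
  have hS4 : ∀ α, ∑ ν, B ν * hessF ρ ν α p = H α := by
    intro α
    simp only [hBdef, Finset.sum_mul]
    rw [Finset.sum_comm]
    have : ∀ lam, ∑ ν, R lam ν * H lam * hessF ρ ν α p
        = H lam * ∑ ν, R lam ν * hessF ρ ν α p := by
      intro lam; rw [Finset.mul_sum]; exact Finset.sum_congr rfl fun ν _ => by ring
    rw [Finset.sum_congr rfl fun lam _ => this lam]
    simp only [hR2']
    simp [Finset.sum_ite_eq]
  -- the key linear-combination identity
  have hkey : ∀ α, hessTbar ψ j α p = ∑ ν, c ν * hessF ψ ν α p := by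
    intro α
    have expand : ∀ ν, c ν * hessF ψ ν α p
        = z⁻¹ ^ 2 * dzbar ρ α p * (k * (A ν * dza ρ ν p))
          + z⁻¹ ^ 2 * dzbar ρ α p * (B ν * dza ρ ν p)
          - (z⁻¹ * k * (A ν * hessF ρ ν α p) + z⁻¹ * (B ν * hessF ρ ν α p)) := by
      intro ν
      rw [hM ν α, hcdef]
      ring
    rw [Finset.sum_congr rfl fun ν _ => expand ν]
    rw [Finset.sum_sub_distrib, Finset.sum_add_distrib, Finset.sum_add_distrib]
    simp only [← Finset.mul_sum]
    rw [hS1, hS2, hS3, hS4, hT α, hkdef]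
    field_simp
    ring
  -- finish using hΨ1
  have hΨ1' : ∀ ν, (∑ α, hessF ψ ν α p * Ψ α β) = if ν = β then 1 else 0 := by
    intro ν
    have := congrFun (congrFun hΨ1 ν) β
    simpa [Matrix.mul_apply, Matrix.one_apply] using this
  calc ∑ α, hessTbar ψ j α p * Ψ α β
      = ∑ α, (∑ ν, c ν * hessF ψ ν α p) * Ψ α β := by
        exact Finset.sum_congr rfl fun α _ => by rw [hkey α]
    _ = ∑ ν, c ν * ∑ α, hessF ψ ν α p * Ψ α β := by
        simp only [Finset.sum_mul]
        rw [Finset.sum_comm]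
        exact Finset.sum_congr rfl fun ν _ => by
          rw [Finset.mul_sum]; exact Finset.sum_congr rfl fun α _ => by ring
    _ = c β := by
        simp only [hΨ1', mul_ite, mul_one, mul_zero]
        simp [Finset.sum_ite_eq']
    _ = _ := hRHS.symm


end Stmt9
end
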